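/- arXiv:2510.22361 — 2 statements merged into one kernel-verified Lean document; each statement's English description precedes it below -/
import Mathlib

section
/- For all n ≥ 1, the parity-constrained Hanoi graph P^n contains a Hamiltonian path from the perfect state 0^n (all discs on peg 0) to the perfect state 3^n (all discs on peg 3). -/
/-- Parity constraint on a state: disc `d+1` (labelled `1,…,n`) may not sit on
peg `2` if it is even, nor on peg `1` if it is odd. -/
def pegOK (n : ℕ) (s : Fin n → Fin 4) : Prop :=
  ∀ d : Fin n, (Even ((d : ℕ) + 1) → s d ≠ 2) ∧ (Odd ((d : ℕ) + 1) → s d ≠ 1)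

instance (n : ℕ) : DecidablePred (pegOK n) := fun s => by
  unfold pegOK; infer_instance

/-- Vertices of the parity-constrained Hanoi graph `P^n`. -/
abbrev PVertex (n : ℕ) := {s : Fin n → Fin 4 // pegOK n s}

/-- The parity-constrained four-peg Hanoi graph `P^n`: two states are adjacent iff
they differ in exactly one coordinate `d` (a legal move of disc `d+1`) and no
smaller disc sits on either of the two pegs involved. -/
def PGraph (n : ℕ) : SimpleGraph (PVertex n) where
  Adj s t := ∃ d : Fin n,
    s.1 d ≠ t.1 d ∧ (∀ k, k ≠ d → s.1 k = t.1 k) ∧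
    (∀ k, k < d → s.1 k ≠ s.1 d ∧ s.1 k ≠ t.1 d)
  symm := by
    constructor
    rintro s t ⟨d, hne, heq, hlt⟩
    refine ⟨d, hne.symm, fun k hk => (heq k hk).symm, fun k hk => ?_⟩
    have h := hlt k hk
    rw [← heq k (ne_of_lt hk)]
    exact ⟨h.2, h.1⟩
  loopless := by constructor; rintro s ⟨d, hne, -⟩; exact hne rfl

instance (n : ℕ) : DecidableRel (PGraph n).Adj := fun s t =>
  decidable_of_iff (∃ d : Fin n,
    s.1 d ≠ t.1 d ∧ (∀ k, k ≠ d → s.1 k = t.1 k) ∧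
    (∀ k, k < d → s.1 k ≠ s.1 d ∧ s.1 k ≠ t.1 d)) Iff.rfl

/-- The perfect state with every disc on the neutral peg `p`. -/
def perfectState (n : ℕ) (p : Fin 4) (h2 : p ≠ 2) (h1 : p ≠ 1) : PVertex n :=
  ⟨fun _ => p, fun _ => ⟨fun _ => h2, fun _ => h1⟩⟩

/-!
Induction on `n`. Sorting the states of `P^(n+1)` by the peg of the largest disc splits
`P^(n+1)` into three copies of `P^n`, for the pegs `0`, `m` and `3`, where `m ∈ {1, 2}` is the
peg the parity rule allows. The largest disc can move `0 → m` when all smaller discs lie on `3`,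
and `m → 3` when they all lie on `0`. Hence a Hamiltonian path `0^n ⇝ 3^n` of `P^n`, traversed
forwards in copy `0`, backwards in copy `m` and forwards in copy `3`, and joined by these two
moves, is a Hamiltonian path `0^(n+1) ⇝ 3^(n+1)`.
-/

open Function Set

namespace SimpleGraph.Walk

variable {α β : Type*} {G : SimpleGraph α} {G' : SimpleGraph β}

theorem IsHamiltonian.exists_of_three_copies [DecidableEq α] [DecidableEq β] {a b : α}
    {p : G.Walk a b} (hp : p.IsHamiltonian) (f g h : G →g G')
    (hf : Injective f) (hg : Injective g) (hh : Injective h)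
    (hfg : Disjoint (range f) (range g)) (hfh : Disjoint (range f) (range h))
    (hgh : Disjoint (range g) (range h))
    (hcover : ∀ y, y ∈ range f ∨ y ∈ range g ∨ y ∈ range h)
    (hfgb : G'.Adj (f b) (g b)) (hgha : G'.Adj (g a) (h a)) :
    ∃ q : G'.Walk (f a) (h b), q.IsHamiltonian := by
  let q := (p.map f).append (cons hfgb ((p.reverse.map g).append (cons hgha (p.map h))))
  have hsupport :
      q.support = p.support.map f ++ (p.support.reverse.map g ++ p.support.map h) := by
    simp [q, support_append, support_map, support_reverse]
  have hnodup : p.support.Nodup := hp.isPath.support_nodup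
  have hdisj {φ ψ : α → β} (hφψ : Disjoint (range φ) (range ψ)) (l l' : List α) :
      (l.map φ).Disjoint (l'.map ψ) := by
    simp only [List.disjoint_iff_ne, List.mem_map]
    rintro _ ⟨x, -, rfl⟩ _ ⟨x', -, rfl⟩
    exact hφψ.ne_of_mem (mem_range_self x) (mem_range_self x')
  refine ⟨q, IsPath.isHamiltonian_of_mem ?_ fun y => ?_⟩
  · rw [isPath_def, hsupport]
    refine (hnodup.map hf).append ((List.nodup_reverse.2 hnodup).map hg |>.append
      (hnodup.map hh) (hdisj hgh _ _)) ?_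
    exact List.disjoint_append_right.2 ⟨hdisj hfg _ _, hdisj hfh _ _⟩
  · rw [hsupport]
    simp only [List.mem_append, List.mem_map, List.mem_reverse]
    rcases hcover y with ⟨x, rfl⟩ | ⟨x, rfl⟩ | ⟨x, rfl⟩
    · exact Or.inl ⟨x, hp.mem_support x, rfl⟩
    · exact Or.inr (Or.inl ⟨x, hp.mem_support x, rfl⟩)
    · exact Or.inr (Or.inr ⟨x, hp.mem_support x, rfl⟩)

end SimpleGraph.Walk

/-- Disc `n + 1`, i.e. coordinate `n`, may sit on peg `q`. -/
def PegAllowed (n : ℕ) (q : Fin 4) : Prop :=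
  (Even (n + 1) → q ≠ 2) ∧ (Odd (n + 1) → q ≠ 1)

def middlePeg (n : ℕ) : Fin 4 := if Even (n + 1) then 1 else 2

theorem pegAllowed_zero (n : ℕ) : PegAllowed n 0 := ⟨fun _ => by decide, fun _ => by decide⟩

theorem pegAllowed_three (n : ℕ) : PegAllowed n 3 := ⟨fun _ => by decide, fun _ => by decide⟩

theorem pegAllowed_middlePeg (n : ℕ) : PegAllowed n (middlePeg n) := by
  unfold PegAllowed middlePeg
  split_ifs with h
  · exact ⟨fun _ => by decide, fun ho => absurd h (Nat.not_even_iff_odd.2 ho)⟩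
  · exact ⟨fun he => absurd he h, fun _ => by decide⟩

theorem middlePeg_ne_zero (n : ℕ) : middlePeg n ≠ 0 := by
  unfold middlePeg; split_ifs <;> decide

theorem middlePeg_ne_three (n : ℕ) : middlePeg n ≠ 3 := by
  unfold middlePeg; split_ifs <;> decide

theorem PegAllowed.eq_zero_or_eq_middlePeg_or_eq_three {n : ℕ} {q : Fin 4}
    (hq : PegAllowed n q) : q = 0 ∨ q = middlePeg n ∨ q = 3 := by
  obtain ⟨hq2, hq1⟩ := hq
  unfold middlePeg
  split_ifs with h
  · fin_cases q <;> simp_all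
  · fin_cases q <;> simp_all

namespace PVertex

variable {n : ℕ}

def snoc (s : PVertex n) (q : Fin 4) (hq : PegAllowed n q) : PVertex (n + 1) :=
  ⟨Fin.snoc s.1 q, Fin.lastCases (by simpa [PegAllowed] using hq)
    fun d => by simpa [Fin.snoc_castSucc] using s.2 d⟩

def init (v : PVertex (n + 1)) : PVertex n :=
  ⟨Fin.init v.1, fun d => v.2 d.castSucc⟩

theorem pegAllowed_last (v : PVertex (n + 1)) : PegAllowed n (v.1 (Fin.last n)) :=
  v.2 (Fin.last n)

@[simp]
theorem snoc_last (s : PVertex n) (q : Fin 4) (hq : PegAllowed n q) :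
    (s.snoc q hq).1 (Fin.last n) = q := by
  simp [snoc]

@[simp]
theorem snoc_castSucc (s : PVertex n) (q : Fin 4) (hq : PegAllowed n q) (d : Fin n) :
    (s.snoc q hq).1 d.castSucc = s.1 d := by
  simp [snoc]

theorem init_snoc_last (v : PVertex (n + 1)) : v.init.snoc _ v.pegAllowed_last = v :=
  Subtype.ext (Fin.snoc_init_self v.1)

theorem snoc_injective (q : Fin 4) (hq : PegAllowed n q) :
    Injective fun s : PVertex n => s.snoc q hq := fun s t hst =>
  Subtype.ext <| funext fun d => by
    simpa using congrFun (congrArg Subtype.val hst) d.castSucc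

theorem snoc_perfectState (p : Fin 4) (h2 : p ≠ 2) (h1 : p ≠ 1) (hp : PegAllowed n p) :
    (perfectState n p h2 h1).snoc p hp = perfectState (n + 1) p h2 h1 :=
  Subtype.ext <| funext <| Fin.lastCases (by simp [perfectState]) fun d => by simp [perfectState]

end PVertex

namespace PGraph

theorem adj_snoc {n : ℕ} {s t : PVertex n} (hst : (PGraph n).Adj s t) (q : Fin 4)
    (hq : PegAllowed n q) : (PGraph (n + 1)).Adj (s.snoc q hq) (t.snoc q hq) := by
  obtain ⟨d, hne, heq, hlt⟩ := hst
  refine ⟨d.castSucc, by simpa using hne, fun k hk => ?_, fun k hk => ?_⟩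
  · induction k using Fin.lastCases with
    | last => simp
    | cast j => simpa using heq j (by rintro rfl; exact hk rfl)
  · induction k using Fin.lastCases with
    | last => exact absurd hk (Fin.castSucc_lt_last d).not_gt
    | cast j => simpa using hlt j (by simpa using hk)

def snocHom (n : ℕ) (q : Fin 4) (hq : PegAllowed n q) : PGraph n →g PGraph (n + 1) :=
  ⟨fun s => s.snoc q hq, fun hst => adj_snoc hst q hq⟩

theorem snocHom_injective (n : ℕ) (q : Fin 4) (hq : PegAllowed n q) :
    Injective (snocHom n q hq) :=
  PVertex.snoc_injective q hq

theorem disjoint_range_snocHom {n : ℕ} {q q' : Fin 4} (hq : PegAllowed n q)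
    (hq' : PegAllowed n q') (hne : q ≠ q') :
    Disjoint (range (snocHom n q hq)) (range (snocHom n q' hq')) := by
  rw [Set.disjoint_left]
  rintro _ ⟨s, rfl⟩ ⟨t, hts⟩
  exact hne <| by
    simpa [snocHom] using congrArg (fun v : PVertex (n + 1) => v.1 (Fin.last n)) hts.symm

theorem mem_range_snocHom {n : ℕ} {v : PVertex (n + 1)} {q : Fin 4} (hq : PegAllowed n q)
    (hv : v.1 (Fin.last n) = q) : v ∈ range (snocHom n q hq) := by
  subst hv
  exact ⟨v.init, v.init_snoc_last⟩

theorem adj_snoc_snoc {n : ℕ} {s : PVertex n} {a b : Fin 4} (ha : PegAllowed n a)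
    (hb : PegAllowed n b) (hab : a ≠ b) (hsa : ∀ k, s.1 k ≠ a) (hsb : ∀ k, s.1 k ≠ b) :
    (PGraph (n + 1)).Adj (s.snoc a ha) (s.snoc b hb) := by
  refine ⟨Fin.last n, by simpa using hab, fun k hk => ?_, fun k hk => ?_⟩
  · induction k using Fin.lastCases with
    | last => exact absurd rfl hk
    | cast j => simp
  · induction k using Fin.lastCases with
    | last => exact absurd hk (lt_irrefl _)
    | cast j => simpa using ⟨hsa j, hsb j⟩

theorem exists_isHamiltonian_perfectState_zero_three (n : ℕ) :
    ∃ p : (PGraph n).Walk (perfectState n 0 (by decide) (by decide))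
        (perfectState n 3 (by decide) (by decide)), p.IsHamiltonian := by
  induction n with
  | zero => exact ⟨SimpleGraph.Walk.nil.copy rfl (Subsingleton.elim _ _), .of_subsingleton⟩
  | succ n ih =>
    obtain ⟨p, hp⟩ := ih
    have h0 := pegAllowed_zero n
    have hm := pegAllowed_middlePeg n
    have h3 := pegAllowed_three n
    have h0m := (middlePeg_ne_zero n).symm
    have hm3 := middlePeg_ne_three n
    have h03 : (0 : Fin 4) ≠ 3 := by decide
    rw [← PVertex.snoc_perfectState 0 _ _ h0, ← PVertex.snoc_perfectState 3 _ _ h3]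
    refine hp.exists_of_three_copies (snocHom n 0 h0) (snocHom n (middlePeg n) hm)
      (snocHom n 3 h3) (snocHom_injective _ _ _) (snocHom_injective _ _ _)
      (snocHom_injective _ _ _) (disjoint_range_snocHom _ _ h0m)
      (disjoint_range_snocHom _ _ h03) (disjoint_range_snocHom _ _ hm3) (fun v => ?_)
      (adj_snoc_snoc h0 hm h0m (fun _ => h03.symm) (fun _ => hm3.symm))
      (adj_snoc_snoc hm h3 hm3 (fun _ => h0m) (fun _ => h03))
    rcases v.pegAllowed_last.eq_zero_or_eq_middlePeg_or_eq_three with hv | hv | hv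
    · exact .inl (mem_range_snocHom _ hv)
    · exact .inr (.inl (mem_range_snocHom _ hv))
    · exact .inr (.inr (mem_range_snocHom _ hv))

end PGraph

/-- For `n ≥ 1`, there is a Hamiltonian path in `P^n` from the perfect state
`0^n` (all discs on peg `0`) to the perfect state `3^n` (all discs on peg `3`). -/
theorem stmt14 : ∀ n : ℕ, 1 ≤ n →
    ∃ p : (PGraph n).Walk (perfectState n 0 (by decide) (by decide))
        (perfectState n 3 (by decide) (by decide)),
      p.IsHamiltonian :=
  fun n _ => PGraph.exists_isHamiltonian_perfectState_zero_three n
end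

section
/- For all n ≥ 1, the chromatic number of the parity-constrained Hanoi graph P^n equals 3. -/
/-!
Colour a state by the sum, in `ZMod 3`, of the colours of the pegs its discs sit on, where
pegs `1` and `2` share a colour. A move changes a single coordinate, and since every disc
avoids peg `1` or peg `2`, its two pegs carry different colours, so the colour of the state
changes. Conversely the three positions of the smallest disc, with all other discs on peg `0`,
form a triangle.
-/

theorem SimpleGraph.chromaticNumber_eq_of_colorable_of_isNClique {V : Type*}
    {G : SimpleGraph V} {n : ℕ} {s : Finset V} (hc : G.Colorable n) (hs : G.IsNClique n s) :
    G.chromaticNumber = n :=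
  le_antisymm hc.chromaticNumber_le (hs.card_eq ▸ hs.isClique.card_le_chromaticNumber)

theorem Fintype.sum_ne_sum_of_differ_only_at {ι M : Type*} [Fintype ι] [AddCancelCommMonoid M]
    {f g : ι → M} {d : ι} (hd : f d ≠ g d) (h : ∀ k, k ≠ d → f k = g k) :
    ∑ k, f k ≠ ∑ k, g k := by
  classical
  rw [← Finset.add_sum_erase _ _ (Finset.mem_univ d),
    ← Finset.add_sum_erase _ _ (Finset.mem_univ d), Finset.sum_congr rfl fun k hk => h k (Finset.ne_of_mem_erase hk)]
  exact fun heq => hd (add_right_cancel heq)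

def forbiddenPeg (d : ℕ) : Fin 4 := if Even (d + 1) then 2 else 1

theorem forbiddenPeg_eq_one_or_two (d : ℕ) : forbiddenPeg d = 1 ∨ forbiddenPeg d = 2 := by
  unfold forbiddenPeg
  split_ifs <;> simp

theorem pegOK.ne_forbiddenPeg {n : ℕ} {s : Fin n → Fin 4} (hs : pegOK n s) (d : Fin n) :
    s d ≠ forbiddenPeg d := by
  unfold forbiddenPeg
  split_ifs with h
  · exact (hs d).1 h
  · exact (hs d).2 (Nat.not_even_iff_odd.mp h)

def pegColor : Fin 4 → ZMod 3 := ![0, 1, 1, 2]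

theorem pegColor_injOn_compl_forbiddenPeg (d : ℕ) : Set.InjOn pegColor {forbiddenPeg d}ᶜ := by
  rcases forbiddenPeg_eq_one_or_two d with h | h <;>
    · simp only [h, Set.InjOn, Set.mem_compl_iff, Set.mem_singleton_iff]
      decide

def stateColor (n : ℕ) (s : PVertex n) : ZMod 3 := ∑ d, pegColor (s.1 d)

theorem PGraph.stateColor_ne_of_adj {n : ℕ} {s t : PVertex n} (h : (PGraph n).Adj s t) :
    stateColor n s ≠ stateColor n t := by
  obtain ⟨d, hne, heq, -⟩ := h
  refine Fintype.sum_ne_sum_of_differ_only_at (fun hcol => hne ?_)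
    fun k hk => congrArg pegColor (heq k hk)
  exact pegColor_injOn_compl_forbiddenPeg d (s.2.ne_forbiddenPeg d) (t.2.ne_forbiddenPeg d) hcol

theorem PGraph.colorable_three (n : ℕ) : (PGraph n).Colorable 3 := by
  simpa using (SimpleGraph.Coloring.mk (stateColor n) PGraph.stateColor_ne_of_adj).colorable

theorem PGraph.adj_of_differ_only_at_zero {m : ℕ} {s t : PVertex (m + 1)} (h0 : s.1 0 ≠ t.1 0)
    (h : ∀ k, k ≠ 0 → s.1 k = t.1 k) : (PGraph (m + 1)).Adj s t :=
  ⟨0, h0, h, fun k hk => absurd hk (Fin.not_lt_zero k)⟩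

def smallestDiscOn (m : ℕ) (a : Fin 4) (ha : a ≠ 1) : PVertex (m + 1) :=
  ⟨Fin.cons a 0, fun d => by
    cases d using Fin.cases with
    | zero => exact ⟨fun h => absurd h (by simp), fun _ => ha⟩
    | succ k => exact ⟨fun _ => by simp, fun _ => by simp⟩⟩

theorem smallestDiscOn_adj {m : ℕ} {a b : Fin 4} (ha : a ≠ 1) (hb : b ≠ 1) (hab : a ≠ b) :
    (PGraph (m + 1)).Adj (smallestDiscOn m a ha) (smallestDiscOn m b hb) := by
  refine PGraph.adj_of_differ_only_at_zero (by simpa [smallestDiscOn] using hab) fun k hk => ?_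
  obtain ⟨j, rfl⟩ := Fin.exists_succ_eq.mpr hk
  simp [smallestDiscOn]

theorem PGraph.isNClique_three (m : ℕ) :
    (PGraph (m + 1)).IsNClique 3
      {smallestDiscOn m 0 (by decide), smallestDiscOn m 2 (by decide),
        smallestDiscOn m 3 (by decide)} :=
  SimpleGraph.is3Clique_triple_iff.mpr
    ⟨smallestDiscOn_adj _ _ (by decide), smallestDiscOn_adj _ _ (by decide),
      smallestDiscOn_adj _ _ (by decide)⟩

/-- The chromatic number of the parity-constrained Hanoi graph `P^n` is `3`. -/
theorem stmt17 : ∀ n : ℕ, 1 ≤ n → (PGraph n).chromaticNumber = 3 := by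
  intro n hn
  obtain ⟨m, rfl⟩ : ∃ m, n = m + 1 := ⟨n - 1, by omega⟩
  exact SimpleGraph.chromaticNumber_eq_of_colorable_of_isNClique (PGraph.colorable_three _)
    (PGraph.isNClique_three m)
end
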